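/- Fix an integer n ≥ 3. Let X be ℝ³ equipped with the norm ‖(x,y,z)‖ = max over j ∈ {0, 1, …, 2n−1} of max{ (|cos((2j+1)π/(2n))| |x| + |sin((2j+1)π/(2n))| |y|) / cos(π/(2n)), (|cos((2j+1)π/(2n))| |x| + |sin((2j+1)π/(2n))| |y|) / (2 cos(π/(2n))) + |z|/2 } (so that the unit ball of X is the polyhedron with vertices (cos(jπ/n), sin(jπ/n), ±1), j = 0, …, 2n−1, together with (0,0,±2)). Then X does not have Property P_3; indeed, (1,0,1)^⊥ ∪ (−1,0,1)^⊥ ∪ (0,0,2)^⊥ = X. -/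

import Mathlib

open scoped Real

def BJOrth {E : Type*} [NormedAddCommGroup E] [NormedSpace ℝ E] (x y : E) : Prop :=
  ∀ lam : ℝ, ‖x‖ ≤ ‖x + lam • y‖

def PropertyP (X : Type*) [NormedAddCommGroup X] [NormedSpace ℝ X] (n : ℕ) : Prop :=
  ∀ x : Fin n → X, (∀ i, ‖x i‖ = 1) → (⋃ i, {y : X | BJOrth (x i) y}) ≠ Set.univ

/-!
With `t = tan (π / 2n)`, the facet `j = 0` of the norm gives the lower bounds
`‖v‖ ≥ |x| + t |y|` and `‖v‖ ≥ (|x| + t |y| + |z|) / 2`, so every functional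
`σ x + q y` and `(σ x + q y + z) / 2` with `|σ| ≤ 1`, `|q| ≤ t` is dominated by the norm.
A unit vector `u` is Birkhoff–James orthogonal to `w` as soon as two such functionals that
norm `u` take values of opposite signs at `w`. The apex `(0, 0, 2)` is normed by all the
functionals of the second kind, which settles every `w` with `|z| ≤ |x| + t |y|`; for the
remaining `w` one of the vertices `(±1, 0, 1)`, normed by functionals of both kinds, does the job,
the sign being chosen against that of `x z`.
-/

theorem bjOrth_of_dual {E : Type*} [NormedAddCommGroup E] [NormedSpace ℝ E] {x y : E}
    (f g : Module.Dual ℝ E) (hf : ∀ v, f v ≤ ‖v‖) (hg : ∀ v, g v ≤ ‖v‖)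
    (hfx : ‖x‖ ≤ f x) (hgx : ‖x‖ ≤ g x) (hfy : 0 ≤ f y) (hgy : g y ≤ 0) : BJOrth x y := by
  intro lam
  rcases le_total 0 lam with hlam | hlam
  · calc ‖x‖ ≤ f x + lam * f y := by nlinarith
      _ = f (x + lam • y) := by simp
      _ ≤ ‖x + lam • y‖ := hf _
  · calc ‖x‖ ≤ g x + lam * g y := by nlinarith
      _ = g (x + lam • y) := by simp
      _ ≤ ‖x + lam • y‖ := hg _

def coordDual (p q r : ℝ) : Module.Dual ℝ (ℝ × ℝ × ℝ) where
  toFun v := p * v.1 + q * v.2.1 + r * v.2.2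
  map_add' _ _ := by simp only [Prod.fst_add, Prod.snd_add]; ring
  map_smul' _ _ := by simp only [Prod.smul_fst, Prod.smul_snd, smul_eq_mul, RingHom.id_apply]; ring

@[simp]
theorem coordDual_apply (p q r : ℝ) (v : ℝ × ℝ × ℝ) :
    coordDual p q r v = p * v.1 + q * v.2.1 + r * v.2.2 := rfl

theorem mul_le_of_abs_le {p α : ℝ} (hp : |p| ≤ α) (a : ℝ) : p * a ≤ α * |a| :=
  calc p * a ≤ |p| * |a| := by rw [← abs_mul]; exact le_abs_self _
    _ ≤ α * |a| := mul_le_mul_of_nonneg_right hp (abs_nonneg a)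

theorem coordDual_le {p q r α β γ : ℝ} (hp : |p| ≤ α) (hq : |q| ≤ β) (hr : |r| ≤ γ)
    (v : ℝ × ℝ × ℝ) : coordDual p q r v ≤ α * |v.1| + β * |v.2.1| + γ * |v.2.2| := by
  simp only [coordDual_apply]
  linarith [mul_le_of_abs_le hp v.1, mul_le_of_abs_le hq v.2.1, mul_le_of_abs_le hr v.2.2]

theorem exists_abs_le_mul_eq {t : ℝ} (ht : 0 ≤ t) (b : ℝ) : ∃ q, |q| ≤ t ∧ q * b = t * |b| := by
  rcases le_total 0 b with hb | hb
  · exact ⟨t, (abs_of_nonneg ht).le, by rw [abs_of_nonneg hb]⟩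
  · exact ⟨-t, by rw [abs_neg, abs_of_nonneg ht], by rw [abs_of_nonpos hb]; ring⟩

section Cover

variable {X : Type*} [NormedAddCommGroup X] [NormedSpace ℝ X] (e : X ≃ₗ[ℝ] ℝ × ℝ × ℝ) {t : ℝ}

theorem coordDual_comp_le_norm_of_prism
    (hprism : ∀ v, |(e v).1| + t * |(e v).2.1| ≤ ‖v‖) {p q : ℝ} (hp : |p| ≤ 1) (hq : |q| ≤ t)
    (v : X) : (coordDual p q 0).comp (e : X →ₗ[ℝ] ℝ × ℝ × ℝ) v ≤ ‖v‖ := by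
  have := coordDual_le hp hq abs_zero.le (e v)
  simp only [LinearMap.comp_apply, LinearEquiv.coe_coe]
  linarith [hprism v, abs_nonneg (e v).2.2]

theorem coordDual_comp_le_norm_of_pyramid
    (hpyramid : ∀ v, (|(e v).1| + t * |(e v).2.1|) / 2 + |(e v).2.2| / 2 ≤ ‖v‖) {p q : ℝ}
    (hp : |p| ≤ 1) (hq : |q| ≤ t) (v : X) :
    (coordDual (p / 2) (q / 2) (1 / 2)).comp (e : X →ₗ[ℝ] ℝ × ℝ × ℝ) v ≤ ‖v‖ := by
  have := coordDual_le (p := p / 2) (q := q / 2) (r := 1 / 2) (α := 1 / 2) (β := t / 2)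
    (γ := 1 / 2) (by rw [abs_div, abs_two]; linarith) (by rw [abs_div, abs_two]; linarith)
    (by norm_num) (e v)
  simp only [LinearMap.comp_apply, LinearEquiv.coe_coe]
  linarith [hpyramid v]

theorem bjOrth_apex (ht : 0 ≤ t)
    (hpyramid : ∀ v, (|(e v).1| + t * |(e v).2.1|) / 2 + |(e v).2.2| / 2 ≤ ‖v‖)
    (hu : ‖e.symm (0, 0, 2)‖ ≤ 1) {w : X}
    (hw : |(e w).2.2| ≤ |(e w).1| + t * |(e w).2.1|) : BJOrth (e.symm (0, 0, 2)) w := by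
  obtain ⟨σ, hσ, hσa⟩ := exists_abs_le_mul_eq zero_le_one (e w).1
  obtain ⟨q, hq, hqb⟩ := exists_abs_le_mul_eq ht (e w).2.1
  refine bjOrth_of_dual _ _ (coordDual_comp_le_norm_of_pyramid e hpyramid hσ hq)
    (coordDual_comp_le_norm_of_pyramid e hpyramid (p := -σ) (q := -q) (by rwa [abs_neg])
      (by rwa [abs_neg])) ?_ ?_ ?_ ?_ <;>
  simp only [LinearMap.comp_apply, LinearEquiv.coe_coe, LinearEquiv.apply_symm_apply,
    coordDual_apply]
  · linarith
  · linarith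
  · linarith [neg_abs_le (e w).2.2]
  · linarith [le_abs_self (e w).2.2]

theorem bjOrth_vertex (ht : 0 ≤ t) (hprism : ∀ v, |(e v).1| + t * |(e v).2.1| ≤ ‖v‖)
    (hpyramid : ∀ v, (|(e v).1| + t * |(e v).2.1|) / 2 + |(e v).2.2| / 2 ≤ ‖v‖)
    {σ : ℝ} (hσ : |σ| = 1) (hu : ‖e.symm (σ, 0, 1)‖ ≤ 1) {w : X}
    (hw : |(e w).1| + t * |(e w).2.1| < |(e w).2.2|) (hσw : σ * (e w).1 * (e w).2.2 ≤ 0) :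
    BJOrth (e.symm (σ, 0, 1)) w := by
  obtain ⟨q, hq, hqb⟩ := exists_abs_le_mul_eq ht (e w).2.1
  have hq' : |-q| ≤ t := by rwa [abs_neg]
  have hσσ : σ * σ = 1 := by rw [← abs_mul_abs_self, hσ, one_mul]
  have hσa := mul_le_of_abs_le hσ.le (e w).1
  have hσa' := mul_le_of_abs_le (p := -σ) (by rw [abs_neg, hσ]) (e w).1
  have htb : 0 ≤ t * |(e w).2.1| := mul_nonneg ht (abs_nonneg _)
  have hc0 : (e w).2.2 ≠ 0 := abs_pos.mp ((add_nonneg (abs_nonneg _) htb).trans_lt hw)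
  rcases hc0.lt_or_gt with hc | hc
  · rw [abs_of_neg hc] at hw
    have : 0 ≤ σ * (e w).1 := nonneg_of_mul_nonpos_left hσw hc
    refine bjOrth_of_dual _ _ (coordDual_comp_le_norm_of_prism e hprism hσ.le hq)
      (coordDual_comp_le_norm_of_pyramid e hpyramid hσ.le hq') ?_ ?_ ?_ ?_ <;>
    simp only [LinearMap.comp_apply, LinearEquiv.coe_coe, LinearEquiv.apply_symm_apply,
      coordDual_apply] <;>
    linarith
  · rw [abs_of_pos hc] at hw
    have : σ * (e w).1 ≤ 0 := nonpos_of_mul_nonpos_left hσw hc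
    refine bjOrth_of_dual _ _ (coordDual_comp_le_norm_of_pyramid e hpyramid hσ.le hq)
      (coordDual_comp_le_norm_of_prism e hprism hσ.le hq') ?_ ?_ ?_ ?_ <;>
    simp only [LinearMap.comp_apply, LinearEquiv.coe_coe, LinearEquiv.apply_symm_apply,
      coordDual_apply] <;>
    linarith

theorem bjOrth_cover (ht : 0 ≤ t) (hprism : ∀ v, |(e v).1| + t * |(e v).2.1| ≤ ‖v‖)
    (hpyramid : ∀ v, (|(e v).1| + t * |(e v).2.1|) / 2 + |(e v).2.2| / 2 ≤ ‖v‖)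
    (h₁ : ‖e.symm (1, 0, 1)‖ ≤ 1) (h₂ : ‖e.symm (-1, 0, 1)‖ ≤ 1) (h₃ : ‖e.symm (0, 0, 2)‖ ≤ 1)
    (w : X) :
    BJOrth (e.symm (1, 0, 1)) w ∨ BJOrth (e.symm (-1, 0, 1)) w ∨ BJOrth (e.symm (0, 0, 2)) w := by
  rcases le_or_gt |(e w).2.2| (|(e w).1| + t * |(e w).2.1|) with hw | hw
  · exact Or.inr (Or.inr (bjOrth_apex e ht hpyramid h₃ hw))
  rcases le_total ((e w).1 * (e w).2.2) 0 with hac | hac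
  · exact Or.inl (bjOrth_vertex e ht hprism hpyramid abs_one h₁ hw (by linarith))
  · exact Or.inr (Or.inl (bjOrth_vertex e ht hprism hpyramid (by simp) h₂ hw (by linarith)))

end Cover

theorem not_propertyP_three {X : Type*} [NormedAddCommGroup X] [NormedSpace ℝ X] {u₁ u₂ u₃ : X}
    (h₁ : ‖u₁‖ = 1) (h₂ : ‖u₂‖ = 1) (h₃ : ‖u₃‖ = 1)
    (hcover : ∀ w, BJOrth u₁ w ∨ BJOrth u₂ w ∨ BJOrth u₃ w) : ¬ PropertyP X 3 := by
  refine fun hP ↦ hP ![u₁, u₂, u₃] (by simp [Fin.forall_fin_succ, h₁, h₂, h₃])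
    (Set.eq_univ_of_forall fun w ↦ ?_)
  simpa [Fin.exists_fin_succ] using hcover w

theorem Real.sin_mul_sin_nonneg (n j : ℕ) :
    0 ≤ Real.sin (j * π / n) * Real.sin ((j + 1) * π / n) := by
  rcases Nat.eq_zero_or_pos n with rfl | hn
  · simp
  obtain ⟨r, k, hr, rfl⟩ : ∃ r k, r < n ∧ j = r + n * k :=
    ⟨j % n, j / n, Nat.mod_lt j hn, (Nat.mod_add_div j n).symm⟩
  have hshift (s : ℝ) : (((r + n * k : ℕ) : ℝ) + s) * π / n = (r + s) * π / n + k * π := by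
    push_cast; field_simp; ring
  have hsin (s : ℝ) (hs0 : 0 ≤ s) (hs1 : r + s ≤ n) : 0 ≤ Real.sin ((r + s) * π / n) := by
    apply Real.sin_nonneg_of_nonneg_of_le_pi (by positivity)
    rw [div_le_iff₀ (by positivity)]
    nlinarith [Real.pi_pos]
  have hr' : (r : ℝ) + 1 ≤ n := by exact_mod_cast hr
  have h0 := hshift 0
  rw [add_zero, add_zero] at h0
  rw [h0, hshift, Real.sin_add_nat_mul_pi, Real.sin_add_nat_mul_pi]
  have := mul_nonneg (hsin 0 le_rfl (by linarith)) (hsin 1 zero_le_one hr')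
  rw [add_zero] at this
  calc 0 ≤ ((-1) ^ k) ^ 2 * (Real.sin (r * π / n) * Real.sin ((r + 1) * π / n)) := by positivity
    _ = _ := by ring

theorem Real.abs_cos_odd_mul_pi_div_le (n j : ℕ) (hn : n ≠ 0) :
    |Real.cos ((2 * j + 1) * π / (2 * n))| ≤ Real.cos (π / (2 * n)) := by
  have hn' : (1 : ℝ) ≤ n := by exact_mod_cast Nat.one_le_iff_ne_zero.mpr hn
  have hcos : 0 ≤ Real.cos (π / (2 * n)) := by
    apply Real.cos_nonneg_of_mem_Icc
    constructor
    · have : 0 < π / (2 * n) := by positivity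
      linarith [Real.pi_pos]
    · rw [div_le_div_iff₀ (by positivity) two_pos]; nlinarith [Real.pi_pos]
  apply abs_le_of_sq_le_sq _ hcos
  set θ := (2 * j + 1) * π / (2 * n)
  set φ := π / (2 * n)
  have hsum : θ + φ = (j + 1) * π / n := by simp only [θ, φ]; field_simp; ring
  have hdiff : θ - φ = j * π / n := by simp only [θ, φ]; field_simp; ring
  have key : Real.cos φ ^ 2 - Real.cos θ ^ 2 = Real.sin (θ + φ) * Real.sin (θ - φ) := by
    rw [Real.sin_add, Real.sin_sub]
    linear_combination (Real.cos θ ^ 2) * Real.sin_sq_add_cos_sq φ -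
      (Real.cos φ ^ 2) * Real.sin_sq_add_cos_sq θ
  have := Real.sin_mul_sin_nonneg n j
  rw [hsum, hdiff] at key
  nlinarith

/-- The norm of the theorem in coordinates; the nonemptiness proof is an argument so that the
hypothesis on `‖v‖` is definitionally `‖v‖ = cappedPrismNorm n _ (e v)`. -/
noncomputable def cappedPrismNorm (n : ℕ) (hn : 2 * n ≠ 0) (p : ℝ × ℝ × ℝ) : ℝ :=
  (Finset.range (2 * n)).sup' (Finset.nonempty_range_iff.mpr hn)
    (fun j => max
      ((|Real.cos ((2 * (j : ℝ) + 1) * π / (2 * (n : ℝ)))| * |p.1| +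
        |Real.sin ((2 * (j : ℝ) + 1) * π / (2 * (n : ℝ)))| * |p.2.1|) /
          Real.cos (π / (2 * (n : ℝ))))
      ((|Real.cos ((2 * (j : ℝ) + 1) * π / (2 * (n : ℝ)))| * |p.1| +
        |Real.sin ((2 * (j : ℝ) + 1) * π / (2 * (n : ℝ)))| * |p.2.1|) /
          (2 * Real.cos (π / (2 * (n : ℝ)))) + |p.2.2| / 2))

section CappedPrismNorm

variable {n : ℕ}

theorem pi_div_two_mul_mem_Ioo (hn : 2 ≤ n) : π / (2 * n) ∈ Set.Ioo 0 (π / 2) := by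
  have hn' : (2 : ℝ) ≤ n := by exact_mod_cast hn
  refine ⟨by positivity, ?_⟩
  rw [div_lt_div_iff₀ (by positivity) two_pos]
  nlinarith [Real.pi_pos]

theorem le_cappedPrismNorm (hn : 2 ≤ n) (p : ℝ × ℝ × ℝ) :
    max (|p.1| + Real.tan (π / (2 * n)) * |p.2.1|)
      ((|p.1| + Real.tan (π / (2 * n)) * |p.2.1|) / 2 + |p.2.2| / 2) ≤
      cappedPrismNorm n (by omega) p := by
  obtain ⟨h0, hπ2⟩ := pi_div_two_mul_mem_Ioo hn
  have hcos : 0 < Real.cos (π / (2 * n)) := Real.cos_pos_of_mem_Ioo ⟨by linarith, hπ2⟩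
  have hsin : 0 < Real.sin (π / (2 * n)) := Real.sin_pos_of_pos_of_lt_pi h0 (by linarith)
  unfold cappedPrismNorm
  refine (Finset.le_sup' _ (Finset.mem_range.mpr (by omega : 0 < 2 * n))).trans' (le_of_eq ?_)
  simp only [Nat.cast_zero, mul_zero, zero_add, one_mul, abs_of_pos hcos, abs_of_pos hsin,
    Real.tan_eq_sin_div_cos]
  congr 1 <;> field_simp

theorem cappedPrismNorm_vertex (hn : 2 ≤ n) {σ : ℝ} (hσ : |σ| = 1) :
    cappedPrismNorm n (by omega) (σ, 0, 1) = 1 := by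
  obtain ⟨h0, hπ2⟩ := pi_div_two_mul_mem_Ioo hn
  have hcos : 0 < Real.cos (π / (2 * n)) := Real.cos_pos_of_mem_Ioo ⟨by linarith, hπ2⟩
  refine le_antisymm (Finset.sup'_le _ _ fun j _ ↦ ?_) ?_
  · have := Real.abs_cos_odd_mul_pi_div_le n j (by omega)
    simp only [hσ, abs_zero, abs_one, mul_one, mul_zero, add_zero]
    refine max_le ((div_le_one hcos).mpr this) ?_
    rw [div_add_div _ _ (by positivity) two_ne_zero, div_le_one (by positivity)]
    nlinarith
  · simpa only [hσ, abs_zero, mul_zero, add_zero] using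
      (le_cappedPrismNorm hn (σ, 0, 1)).trans' (le_max_left _ _)

theorem cappedPrismNorm_apex (hn : 2 ≤ n) : cappedPrismNorm n (by omega) (0, 0, 2) = 1 := by
  refine le_antisymm (Finset.sup'_le _ _ fun j _ ↦ ?_) ?_
  · norm_num
  · simpa using (le_cappedPrismNorm hn (0, 0, 2)).trans' (le_max_right _ _)

end CappedPrismNorm

/-- Let `n ≥ 3` and let `X` be `ℝ³` (identified via a linear equivalence `e`
with `ℝ × ℝ × ℝ`) with the norm
`‖(x,y,z)‖ = max_{0 ≤ j ≤ 2n−1} max{A_j, A_j/2 + |z|/2}` where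
`A_j = (|cos((2j+1)π/2n)||x| + |sin((2j+1)π/2n)||y|)/cos(π/2n)` (unit ball: the prism with
pyramids glued on top and bottom, having the extra vertices `(0,0,±2)`).
Then `X` fails Property `P_3`; indeed `(1,0,1)^⊥ ∪ (−1,0,1)^⊥ ∪ (0,0,2)^⊥ = X`. -/
theorem stmt17 {X : Type*} [NormedAddCommGroup X] [NormedSpace ℝ X]
    (n : ℕ) (hn : 3 ≤ n) (e : X ≃ₗ[ℝ] ℝ × ℝ × ℝ)
    (hnorm : ∀ v : X, ‖v‖ =
      (Finset.range (2 * n)).sup' (Finset.nonempty_range_iff.mpr (by omega))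
        (fun j => max
          ((|Real.cos ((2 * (j : ℝ) + 1) * π / (2 * (n : ℝ)))| * |(e v).1| +
            |Real.sin ((2 * (j : ℝ) + 1) * π / (2 * (n : ℝ)))| * |(e v).2.1|) /
              Real.cos (π / (2 * (n : ℝ))))
          ((|Real.cos ((2 * (j : ℝ) + 1) * π / (2 * (n : ℝ)))| * |(e v).1| +
            |Real.sin ((2 * (j : ℝ) + 1) * π / (2 * (n : ℝ)))| * |(e v).2.1|) /
              (2 * Real.cos (π / (2 * (n : ℝ)))) + |(e v).2.2| / 2))) :
    ¬ PropertyP X 3 ∧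
    ({w : X | BJOrth (e.symm (1, 0, 1)) w} ∪ {w : X | BJOrth (e.symm (-1, 0, 1)) w} ∪
      {w : X | BJOrth (e.symm (0, 0, 2)) w}) = Set.univ := by
  have hn2 : 2 ≤ n := by omega
  have hnorm' : ∀ v, ‖v‖ = cappedPrismNorm n (by omega) (e v) := hnorm
  have hnorm_symm (p : ℝ × ℝ × ℝ) : ‖e.symm p‖ = cappedPrismNorm n (by omega) p := by
    rw [hnorm', e.apply_symm_apply]
  have ht : 0 ≤ Real.tan (π / (2 * n)) := by
    obtain ⟨h0, hπ2⟩ := pi_div_two_mul_mem_Ioo hn2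
    exact Real.tan_nonneg_of_nonneg_of_le_pi_div_two h0.le hπ2.le
  have hbound (v : X) := hnorm' v ▸ le_cappedPrismNorm hn2 (e v)
  have h₁ : ‖e.symm (1, 0, 1)‖ = 1 := by rw [hnorm_symm, cappedPrismNorm_vertex hn2 abs_one]
  have h₂ : ‖e.symm (-1, 0, 1)‖ = 1 := by
    rw [hnorm_symm, cappedPrismNorm_vertex hn2 (by simp)]
  have h₃ : ‖e.symm (0, 0, 2)‖ = 1 := by rw [hnorm_symm, cappedPrismNorm_apex hn2]
  have hcover := bjOrth_cover e ht (fun v ↦ (le_max_left _ _).trans (hbound v))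
    (fun v ↦ (le_max_right _ _).trans (hbound v)) h₁.le h₂.le h₃.le
  exact ⟨not_propertyP_three h₁ h₂ h₃ hcover,
    Set.eq_univ_of_forall fun w ↦ by simpa [or_assoc] using hcover w⟩
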